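/- Let δ ∈ (0,1) and c(δ,T) > 0. If a system is δ-null controllable on [0,T] with cost c(δ,T) (i.e., for every x₀ there is a control u with ‖u‖² ≤ c(δ,T)²|x₀|² and terminal error E|x(T)|² ≤ δ|x₀|²), then applying the duality identity E⟨x(T), y₁⟩ - ⟨x₀, y(0)⟩ = ⟨u, z⟩_{L²} and Cauchy–Schwarz yields, for every terminal datum y₁ of the dual BSDE: E|y(0;y₁)|² ≤ c(δ,T)(1 + 2(1-δ)⁻¹) ‖z(·;y₁)‖²_{L²} + ((1+δ)/2) E|y₁|². Abstract version: let H, K, W be real Hilbert spaces, let v ∈ H, w ∈ K, β ≥ 0 be given, and suppose for every x ∈ H there exists u ∈ W with ‖u‖_W ≤ γ‖x‖_H and |⟨x, v⟩_H| ≤ ‖u‖_W · ‖w‖_K + √δ · β · ‖x‖_H. Then ‖v‖²_H ≤ γ²(1 + 2(1-δ)⁻¹)‖w‖²_K + ((1+δ)/2) β². -/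

import Mathlib

/-!
Testing the hypothesis with `x = v` gives `‖v‖² ≤ (γ‖w‖ + √δ β)‖v‖`, hence
`‖v‖² ≤ (γ‖w‖ + √δ β)²`. In the square, the cross term `2√δ γ‖w‖β` is split by Young's inequality
with weights `2/(1-δ)` and `(1-δ)/2`, whose product is `1`.
-/

open RealInnerProductSpace

lemma sq_le_sq_of_sq_le_mul {x c : ℝ} (h : x ^ 2 ≤ c * x) : x ^ 2 ≤ c ^ 2 := by
  nlinarith [sq_nonneg (c - x)]

lemma two_mul_le_mul_sq_add_inv_mul_sq {t : ℝ} (ht : 0 < t) (a b : ℝ) :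
    2 * a * b ≤ t * a ^ 2 + t⁻¹ * b ^ 2 := by
  have key : 0 ≤ t⁻¹ * (t * a - b) ^ 2 := by positivity
  have expand : t⁻¹ * (t * a - b) ^ 2 = t * a ^ 2 - 2 * a * b + t⁻¹ * b ^ 2 := by
    field_simp
    ring
  linarith

lemma add_sqrt_mul_sq_le {δ : ℝ} (hδ₀ : 0 ≤ δ) (hδ₁ : δ < 1) (a b : ℝ) :
    (a + Real.sqrt δ * b) ^ 2 ≤ (1 + 2 * (1 - δ)⁻¹) * a ^ 2 + ((1 + δ) / 2) * b ^ 2 := by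
  have hsq : Real.sqrt δ ^ 2 = δ := Real.sq_sqrt hδ₀
  have hpos : 0 < 2 * (1 - δ)⁻¹ := by
    have : 0 < 1 - δ := by linarith
    positivity
  have young := two_mul_le_mul_sq_add_inv_mul_sq hpos a (Real.sqrt δ * b)
  have hinv : (2 * (1 - δ)⁻¹)⁻¹ = (1 - δ) / 2 := by
    rw [mul_inv, inv_inv]
    ring
  rw [hinv, mul_pow, hsq] at young
  have expand : (a + Real.sqrt δ * b) ^ 2 = a ^ 2 + 2 * a * (Real.sqrt δ * b) + δ * b ^ 2 := by
    linear_combination b ^ 2 * hsq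
  have slack : 0 ≤ (1 - δ) ^ 2 / 2 * b ^ 2 := by positivity
  linarith

theorem stmt_17_general {H K W : Type*} [NormedAddCommGroup H] [InnerProductSpace ℝ H]
    [NormedAddCommGroup K] [InnerProductSpace ℝ K]
    [NormedAddCommGroup W] [InnerProductSpace ℝ W]
    (v : H) (w : K) (β γ δ : ℝ)
    (hδ : δ ∈ Set.Ioo (0 : ℝ) 1)
    (h : ∀ x : H, ∃ u : W, ‖u‖ ≤ γ * ‖x‖ ∧
      |⟪x, v⟫| ≤ ‖u‖ * ‖w‖ + Real.sqrt δ * β * ‖x‖) :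
    ‖v‖ ^ 2 ≤ γ ^ 2 * (1 + 2 * (1 - δ)⁻¹) * ‖w‖ ^ 2 + ((1 + δ) / 2) * β ^ 2 := by
  obtain ⟨u, hu, hv⟩ := h v
  have hvv : ‖v‖ ^ 2 ≤ (γ * ‖w‖ + Real.sqrt δ * β) * ‖v‖ :=
    calc ‖v‖ ^ 2 = ⟪v, v⟫ := (real_inner_self_eq_norm_sq v).symm
      _ ≤ |⟪v, v⟫| := le_abs_self _
      _ ≤ ‖u‖ * ‖w‖ + Real.sqrt δ * β * ‖v‖ := hv
      _ ≤ γ * ‖v‖ * ‖w‖ + Real.sqrt δ * β * ‖v‖ := by gcongr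
      _ = (γ * ‖w‖ + Real.sqrt δ * β) * ‖v‖ := by ring
  calc ‖v‖ ^ 2 ≤ (γ * ‖w‖ + Real.sqrt δ * β) ^ 2 := sq_le_sq_of_sq_le_mul hvv
    _ ≤ (1 + 2 * (1 - δ)⁻¹) * (γ * ‖w‖) ^ 2 + ((1 + δ) / 2) * β ^ 2 :=
      add_sqrt_mul_sq_le hδ.1.le hδ.2 _ _
    _ = γ ^ 2 * (1 + 2 * (1 - δ)⁻¹) * ‖w‖ ^ 2 + ((1 + δ) / 2) * β ^ 2 := by ring

theorem stmt_17 {H K W : Type*} [NormedAddCommGroup H] [InnerProductSpace ℝ H]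
    [NormedAddCommGroup K] [InnerProductSpace ℝ K]
    [NormedAddCommGroup W] [InnerProductSpace ℝ W]
    (v : H) (w : K) (β γ δ : ℝ) (hβ : 0 ≤ β) (hγ : 0 ≤ γ)
    (hδ : δ ∈ Set.Ioo (0 : ℝ) 1)
    (h : ∀ x : H, ∃ u : W, ‖u‖ ≤ γ * ‖x‖ ∧
      |⟪x, v⟫| ≤ ‖u‖ * ‖w‖ + Real.sqrt δ * β * ‖x‖) :
    ‖v‖ ^ 2 ≤ γ ^ 2 * (1 + 2 * (1 - δ)⁻¹) * ‖w‖ ^ 2 + ((1 + δ) / 2) * β ^ 2 :=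
  stmt_17_general v w β γ δ hδ h
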